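/- Let a ∈ C¹([0,1]) be positive with a(0)=a(1), let κ ∈ C([0,1]) be nonnegative and not identically zero, and let v ∈ C²([0,1]) satisfy -(a v')' + a κ v ≥ 0 on (0,1) together with v(0)=v(1) and v'(0)=v'(1). Then v ≥ 0 on [0,1]. -/

import Mathlib

open Real Set

lemma keyL_aux (a κ v : ℝ → ℝ)
    (hapos : ∀ t ∈ Set.Icc (0:ℝ) 1, 0 < a t)
    (hκnonneg : ∀ t ∈ Set.Icc (0:ℝ) 1, 0 ≤ κ t)
    (hv : ContDiff ℝ 2 v)
    (hg : ContDiff ℝ 1 (fun t => a t * deriv v t))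
    (hineq : ∀ r ∈ Set.Ioo (0:ℝ) 1,
        0 ≤ -(deriv (fun t => a t * deriv v t) r) + a r * κ r * v r)
    (r₀ s : ℝ) (hr₀ : 0 ≤ r₀) (hs : s ≤ 1) (hd : deriv v r₀ ≤ 0)
    (hneg : ∀ t ∈ Set.Icc r₀ s, v t ≤ 0) :
    ∀ t ∈ Set.Icc r₀ s, v t ≤ v r₀ := by
  set g : ℝ → ℝ := fun t => a t * deriv v t with hgdef
  have hgdiff : Differentiable ℝ g := hg.differentiable (by norm_num)
  have hvdiff : Differentiable ℝ v := hv.differentiable (by norm_num)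
  -- g is antitone on Icc r₀ s
  have hganti : AntitoneOn g (Set.Icc r₀ s) := by
    apply antitoneOn_of_deriv_nonpos (convex_Icc _ _) hgdiff.continuous.continuousOn
      hgdiff.differentiableOn
    intro x hx
    rw [interior_Icc] at hx
    have hx01 : x ∈ Set.Ioo (0:ℝ) 1 := ⟨lt_of_le_of_lt hr₀ hx.1, lt_of_lt_of_le hx.2 hs⟩
    have h1 := hineq x hx01
    have hxI : x ∈ Set.Icc (0:ℝ) 1 := ⟨hx01.1.le, hx01.2.le⟩
    have h2 : a x * κ x * v x ≤ 0 :=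
      mul_nonpos_of_nonneg_of_nonpos (mul_nonneg (hapos x hxI).le (hκnonneg x hxI))
        (hneg x ⟨hx.1.le, hx.2.le⟩)
    linarith
  intro t ht
  -- hence deriv v ≤ 0 on Icc r₀ s
  have hderivle : ∀ u ∈ Set.Icc r₀ s, deriv v u ≤ 0 := by
    intro u hu
    have hgu : g u ≤ g r₀ := by
      rcases eq_or_lt_of_le hu.1 with h | h
      · rw [← h]
      · exact hganti (left_mem_Icc.mpr (hu.1.trans hu.2)) hu hu.1
    have hgr₀ : g r₀ ≤ 0 := by
      have : (0:ℝ) ≤ a r₀ := (hapos r₀ ⟨hr₀, by linarith [ht.1, ht.2]⟩).le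
      exact mul_nonpos_of_nonneg_of_nonpos this hd
    have hau : 0 < a u := hapos u ⟨hr₀.trans hu.1, hu.2.trans hs⟩
    have hgu' : a u * deriv v u ≤ 0 := hgu.trans hgr₀
    nlinarith [hgu', hau]
  have hvanti : AntitoneOn v (Set.Icc r₀ s) := by
    apply antitoneOn_of_deriv_nonpos (convex_Icc _ _) hvdiff.continuous.continuousOn
      hvdiff.differentiableOn
    intro x hx
    rw [interior_Icc] at hx
    exact hderivle x ⟨hx.1.le, hx.2.le⟩
  rcases eq_or_lt_of_le ht.1 with h | h
  · rw [← h]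
  · exact hvanti (left_mem_Icc.mpr (ht.1.trans ht.2)) ht ht.1

lemma keyL (a κ v : ℝ → ℝ)
    (hapos : ∀ t ∈ Set.Icc (0:ℝ) 1, 0 < a t)
    (hκnonneg : ∀ t ∈ Set.Icc (0:ℝ) 1, 0 ≤ κ t)
    (hv : ContDiff ℝ 2 v)
    (hg : ContDiff ℝ 1 (fun t => a t * deriv v t))
    (hineq : ∀ r ∈ Set.Ioo (0:ℝ) 1,
        0 ≤ -(deriv (fun t => a t * deriv v t) r) + a r * κ r * v r)
    (r₀ : ℝ) (hr₀ : r₀ ∈ Set.Ico (0:ℝ) 1)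
    (hmin : ∀ t ∈ Set.Icc (0:ℝ) 1, v r₀ ≤ v t)
    (hm : v r₀ < 0) (hd : deriv v r₀ ≤ 0) :
    ∀ t ∈ Set.Icc r₀ 1, v t = v r₀ := by
  have hvcont : Continuous v := hv.continuous
  set S : Set ℝ := {s | s ∈ Set.Icc r₀ 1 ∧ ∀ t ∈ Set.Icc r₀ s, v t ≤ 0} with hSdef
  have hr₀S : r₀ ∈ S := by
    refine ⟨⟨le_rfl, hr₀.2.le⟩, fun t ht => ?_⟩
    have : t = r₀ := le_antisymm ht.2 ht.1
    rw [this]; exact hm.le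
  have hbdd : BddAbove S := ⟨1, fun s hs => hs.1.2⟩
  set σ := sSup S with hσdef
  have hσlb : r₀ ≤ σ := le_csSup hbdd hr₀S
  have hσub : σ ≤ 1 := csSup_le ⟨r₀, hr₀S⟩ fun s hs => hs.1.2
  -- v ≤ 0 on [r₀, σ)
  have hIco : ∀ t ∈ Set.Ico r₀ σ, v t ≤ 0 := by
    intro t ht
    obtain ⟨s, hsS, hts⟩ := exists_lt_of_lt_csSup ⟨r₀, hr₀S⟩ ht.2
    exact hsS.2 t ⟨ht.1, hts.le⟩
  -- v σ ≤ 0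
  have hvσ : v σ ≤ 0 := by
    rcases eq_or_lt_of_le hσlb with h | h
    · rw [← h]; exact hm.le
    · have hne : (nhdsWithin σ (Set.Ioo r₀ σ)).NeBot := by
        apply mem_closure_iff_nhdsWithin_neBot.mp
        rw [closure_Ioo (ne_of_lt h)]
        exact ⟨h.le, le_rfl⟩
      have htend : Filter.Tendsto v (nhdsWithin σ (Set.Ioo r₀ σ)) (nhds (v σ)) :=
        (hvcont.continuousAt.tendsto).mono_left nhdsWithin_le_nhds
      refine le_of_tendsto htend ?_
      filter_upwards [self_mem_nhdsWithin] with t ht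
      exact hIco t ⟨ht.1.le, ht.2⟩
  have hAll : ∀ t ∈ Set.Icc r₀ σ, v t ≤ 0 := by
    intro t ht
    rcases eq_or_lt_of_le ht.2 with h | h
    · rw [h]; exact hvσ
    · exact hIco t ⟨ht.1, h⟩
  have hle : ∀ t ∈ Set.Icc r₀ σ, v t ≤ v r₀ :=
    keyL_aux a κ v hapos hκnonneg hv hg hineq r₀ σ hr₀.1 hσub hd hAll
  -- σ = 1
  have hσ1 : σ = 1 := by
    by_contra hne1
    have hσlt : σ < 1 := lt_of_le_of_ne hσub hne1
    have hvσm : v σ < 0 := lt_of_le_of_lt (hle σ ⟨hσlb, le_rfl⟩) hm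
    have hev : ∀ᶠ t in nhds σ, v t < 0 :=
      (hvcont.continuousAt.tendsto).eventually_lt_const hvσm
    obtain ⟨ε, hε, hball⟩ := Metric.eventually_nhds_iff.mp hev
    set s' := min 1 (σ + ε/2) with hs'def
    have hσs' : σ < s' := lt_min hσlt (by linarith)
    have hs'S : s' ∈ S := by
      refine ⟨⟨hσlb.trans hσs'.le, min_le_left _ _⟩, fun t ht => ?_⟩
      rcases le_or_gt t σ with h | h
      · exact hAll t ⟨ht.1, h⟩
      · have : dist t σ < ε := by
          rw [Real.dist_eq, abs_of_pos (by linarith)]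
          have : t ≤ σ + ε/2 := ht.2.trans (min_le_right _ _)
          linarith
        exact (hball this).le
    exact absurd (le_csSup hbdd hs'S) (not_le.mpr hσs')
  intro t ht
  rw [← hσ1] at ht
  exact le_antisymm (hle t ht)
    (hmin t ⟨hr₀.1.trans ht.1, ht.2.trans hσub⟩)

theorem stmt_12 (a κ v : ℝ → ℝ)
    (ha : ContDiff ℝ 1 a)
    (hapos : ∀ t ∈ Set.Icc (0:ℝ) 1, 0 < a t)
    (haper : a 0 = a 1)
    (hκcont : ContinuousOn κ (Set.Icc 0 1))
    (hκnonneg : ∀ t ∈ Set.Icc (0:ℝ) 1, 0 ≤ κ t)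
    (hκnontriv : ∃ t ∈ Set.Icc (0:ℝ) 1, κ t ≠ 0)
    (hv : ContDiff ℝ 2 v)
    (hineq : ∀ r ∈ Set.Ioo (0:ℝ) 1,
        0 ≤ -(deriv (fun t => a t * deriv v t) r) + a r * κ r * v r)
    (hbv : v 0 = v 1) (hbv' : deriv v 0 = deriv v 1) :
    ∀ r ∈ Set.Icc (0:ℝ) 1, 0 ≤ v r := by
  have hvcont : Continuous v := hv.continuous
  have hvdiff : Differentiable ℝ v := hv.differentiable (by norm_num)
  have hdv : ContDiff ℝ 1 (deriv v) := by
    have h2 : ContDiff ℝ ((1:ℕ)+1 : ℕ) v := by exact_mod_cast hv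
    exact (contDiff_succ_iff_deriv.mp (by exact_mod_cast h2)).2.2
  have hg : ContDiff ℝ 1 (fun t => a t * deriv v t) := ha.mul hdv
  by_contra hcon
  push_neg at hcon
  obtain ⟨rneg, hrneg, hvneg⟩ := hcon
  obtain ⟨r₀, hr₀I, hr₀min⟩ := isCompact_Icc.exists_isMinOn (α := ℝ)
    (Set.nonempty_Icc.mpr (by norm_num : (0:ℝ) ≤ 1)) hvcont.continuousOn
  have hmin : ∀ t ∈ Set.Icc (0:ℝ) 1, v r₀ ≤ v t := fun t ht => hr₀min ht
  have hm : v r₀ < 0 := lt_of_le_of_lt (hmin rneg hrneg) hvneg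
  -- Step 1: v 1 = v r₀
  have hv1 : v 1 = v r₀ := by
    rcases eq_or_lt_of_le hr₀I.2 with h1 | h1
    · rw [h1]
    rcases eq_or_lt_of_le hr₀I.1 with h0 | h0
    · rw [← hbv, ← h0]
    · -- interior minimum
      have hloc : IsLocalMin v r₀ := by
        have : Set.Icc (0:ℝ) 1 ∈ nhds r₀ :=
          Filter.mem_of_superset (isOpen_Ioo.mem_nhds ⟨h0, h1⟩) Set.Ioo_subset_Icc_self
        exact Filter.eventually_of_mem this fun t ht => hmin t ht
      have hd0 : deriv v r₀ = 0 := hloc.deriv_eq_zero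
      exact keyL a κ v hapos hκnonneg hv hg hineq r₀ ⟨hr₀I.1, h1⟩ hmin hm (le_of_eq hd0)
        1 ⟨hr₀I.2, le_rfl⟩
  -- Step 2: deriv v 1 ≤ 0 (minimum at the right endpoint)
  have hmin1 : ∀ t ∈ Set.Icc (0:ℝ) 1, v 1 ≤ v t := by
    intro t ht; rw [hv1]; exact hmin t ht
  have hd1 : deriv v 1 ≤ 0 := by
    have hd : HasDerivAt v (deriv v 1) 1 := (hvdiff 1).hasDerivAt
    have hs := hasDerivAt_iff_tendsto_slope.mp hd
    have hsub : Set.Ioo (0:ℝ) 1 ⊆ {x | x ≠ 1} := fun x hx => ne_of_lt hx.2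
    have hmono : Filter.Tendsto (slope v 1) (nhdsWithin 1 (Set.Ioo 0 1)) (nhds (deriv v 1)) :=
      hs.mono_left (nhdsWithin_mono 1 hsub)
    have hne : (nhdsWithin (1:ℝ) (Set.Ioo 0 1)).NeBot := by
      apply mem_closure_iff_nhdsWithin_neBot.mp
      rw [closure_Ioo (by norm_num : (0:ℝ) ≠ 1)]
      exact ⟨by norm_num, le_rfl⟩
    refine le_of_tendsto hmono ?_
    filter_upwards [self_mem_nhdsWithin] with t ht
    have h1 : 0 ≤ v t - v 1 := by
      have := hmin1 t ⟨ht.1.le, ht.2.le⟩; linarith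
    rw [slope_def_field]
    exact div_nonpos_of_nonneg_of_nonpos h1 (by linarith [ht.2])
  have hd0 : deriv v 0 ≤ 0 := by rw [hbv']; exact hd1
  have hv0 : v 0 = v r₀ := by rw [hbv]; exact hv1
  have hmin0 : ∀ t ∈ Set.Icc (0:ℝ) 1, v 0 ≤ v t := by
    intro t ht; rw [hv0]; exact hmin t ht
  have hm0 : v 0 < 0 := by rw [hv0]; exact hm
  -- Step 3: v is constant on [0,1]
  have hconst : ∀ t ∈ Set.Icc (0:ℝ) 1, v t = v 0 :=
    keyL a κ v hapos hκnonneg hv hg hineq 0 ⟨le_rfl, by norm_num⟩ hmin0 hm0 hd0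
  -- Step 4: κ = 0 on (0,1)
  have hκzero : ∀ r ∈ Set.Ioo (0:ℝ) 1, κ r = 0 := by
    intro r hr
    have hrI : r ∈ Set.Icc (0:ℝ) 1 := ⟨hr.1.le, hr.2.le⟩
    have hdvzero : ∀ t ∈ Set.Ioo (0:ℝ) 1, deriv v t = 0 := by
      intro t ht
      have hev : v =ᶠ[nhds t] fun _ => v 0 := by
        filter_upwards [isOpen_Ioo.mem_nhds ht] with u hu
        exact hconst u ⟨hu.1.le, hu.2.le⟩
      rw [hev.deriv_eq, deriv_const]
    have hgev : (fun t => a t * deriv v t) =ᶠ[nhds r] fun _ => (0:ℝ) := by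
      filter_upwards [isOpen_Ioo.mem_nhds hr] with u hu
      rw [hdvzero u hu, mul_zero]
    have hdg : deriv (fun t => a t * deriv v t) r = 0 := by
      rw [hgev.deriv_eq, deriv_const]
    have h1 := hineq r hr
    rw [hdg] at h1
    have har : 0 < a r := hapos r hrI
    have hκr : 0 ≤ κ r := hκnonneg r hrI
    have hvr : v r = v 0 := hconst r hrI
    rw [hvr] at h1
    by_contra hk
    have hkpos : 0 < κ r := lt_of_le_of_ne hκr (Ne.symm hk)
    nlinarith [mul_pos har hkpos, hm0]
  -- Step 5: κ = 0 at the endpoints, contradiction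
  have hκend : ∀ x : ℝ, x ∈ Set.Icc (0:ℝ) 1 → x ∈ closure (Set.Ioo (0:ℝ) 1) → κ x = 0 := by
    intro x hxI hxcl
    have hne : (nhdsWithin x (Set.Ioo (0:ℝ) 1)).NeBot :=
      mem_closure_iff_nhdsWithin_neBot.mp hxcl
    have ht1 : Filter.Tendsto κ (nhdsWithin x (Set.Ioo (0:ℝ) 1)) (nhds (κ x)) :=
      (hκcont x hxI).mono_left (nhdsWithin_mono x Set.Ioo_subset_Icc_self)
    have ht2 : Filter.Tendsto κ (nhdsWithin x (Set.Ioo (0:ℝ) 1)) (nhds 0) := by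
      have : ∀ᶠ u in nhdsWithin x (Set.Ioo (0:ℝ) 1), κ u = 0 := by
        filter_upwards [self_mem_nhdsWithin] with u hu
        exact hκzero u hu
      exact Filter.Tendsto.congr' (Filter.EventuallyEq.symm this) tendsto_const_nhds
    exact tendsto_nhds_unique ht1 ht2
  obtain ⟨t, htI, htne⟩ := hκnontriv
  apply htne
  rcases eq_or_lt_of_le htI.1 with h0 | h0
  · rw [← h0]
    exact hκend 0 (by norm_num) (by
      rw [closure_Ioo (by norm_num : (0:ℝ) ≠ 1)]; exact ⟨le_rfl, by norm_num⟩)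
  rcases eq_or_lt_of_le htI.2 with h1 | h1
  · rw [h1]
    exact hκend 1 (by norm_num) (by
      rw [closure_Ioo (by norm_num : (0:ℝ) ≠ 1)]; exact ⟨by norm_num, le_rfl⟩)
  · exact hκzero t ⟨h0, h1⟩
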